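/- arXiv:1511.09047 — 8 statements merged into one kernel-verified Lean document; each statement's English description precedes it below -/
import Mathlib

section
/- For any finite-horizon MDP, any deterministic Markov policy π, and any initial state s_0, the value V^π_0(s_0) defined by the backward recursion equals the sum over all state trajectories φ = (s_0, s_1, …, s_h) ∈ S^{h+1} starting at s_0 of the return times the trajectory probability: V^π_0(s_0) = Σ_φ [Σ_{x=0}^{h−1} R(s_x, π_x(s_x), s_{x+1})] · [Π_{x=0}^{h−1} T(s_x, π_x(s_x), s_{x+1})]. -/
def traj {S : Type} {h : ℕ} (s0 : S) (φ : Fin h → S) : Fin (h + 1) → S :=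
  Fin.cons s0 φ

lemma traj_succ {S : Type} {n : ℕ} (s0 s1 : S) (ψ : Fin n → S) (j : Fin (n+1)) :
    traj s0 (Fin.cons s1 ψ) j.succ = traj s1 ψ j := rfl

lemma sum_cons_decomp {S : Type} [Fintype S] {n : ℕ} (f : (Fin (n+1) → S) → ℝ) :
    ∑ φ : Fin (n+1) → S, f φ = ∑ s1 : S, ∑ ψ : Fin n → S, f (Fin.cons s1 ψ) := by
  rw [← (Fin.consEquiv (fun _ : Fin (n+1) => S)).sum_comp f, Fintype.sum_prod_type]
  rfl

lemma prod_shift {S : Type} {n : ℕ} (P : ℕ → S → S → ℝ) (s0 s1 : S) (ψ : Fin n → S) :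
    (∏ x : Fin (n+1), P x.val (traj s0 (Fin.cons s1 ψ) x.castSucc)
        (traj s0 (Fin.cons s1 ψ) x.succ))
    = P 0 s0 s1 * ∏ x : Fin n, P (x.val+1) (traj s1 ψ x.castSucc) (traj s1 ψ x.succ) := by
  rw [Fin.prod_univ_succ]; rfl

lemma sum_shift {S : Type} {n : ℕ} (r : ℕ → S → S → ℝ) (s0 s1 : S) (ψ : Fin n → S) :
    (∑ x : Fin (n+1), r x.val (traj s0 (Fin.cons s1 ψ) x.castSucc)
        (traj s0 (Fin.cons s1 ψ) x.succ))
    = r 0 s0 s1 + ∑ x : Fin n, r (x.val+1) (traj s1 ψ x.castSucc) (traj s1 ψ x.succ) := by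
  rw [Fin.sum_univ_succ]; rfl

lemma prob_sum_one {S : Type} [Fintype S] (n : ℕ) (P : ℕ → S → S → ℝ)
    (hP : ∀ t s, ∑ s', P t s s' = 1) (s0 : S) :
    ∑ φ : Fin n → S, ∏ x : Fin n, P x.val (traj s0 φ x.castSucc) (traj s0 φ x.succ) = 1 := by
  induction n generalizing P s0 with
  | zero => simp
  | succ n ih =>
    rw [sum_cons_decomp]
    have : ∀ s1 : S,
        (∑ ψ : Fin n → S, ∏ x : Fin (n+1),
          P x.val (traj s0 (Fin.cons s1 ψ) x.castSucc) (traj s0 (Fin.cons s1 ψ) x.succ))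
        = P 0 s0 s1 := by
      intro s1
      simp_rw [prod_shift]
      rw [← Finset.mul_sum, ih (fun t => P (t+1)) (fun t s => hP (t+1) s) s1, mul_one]
    simp_rw [this]
    exact hP 0 s0

lemma key {S : Type} [Fintype S] (n : ℕ) (P r : ℕ → S → S → ℝ)
    (hP : ∀ t s, ∑ s', P t s s' = 1)
    (V : ℕ → S → ℝ) (hVn : ∀ s, V n s = 0)
    (hV : ∀ t, t < n → ∀ s, V t s = ∑ s', P t s s' * (r t s s' + V (t+1) s'))
    (s0 : S) :
    V 0 s0 = ∑ φ : Fin n → S,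
      (∑ x : Fin n, r x.val (traj s0 φ x.castSucc) (traj s0 φ x.succ)) *
      (∏ x : Fin n, P x.val (traj s0 φ x.castSucc) (traj s0 φ x.succ)) := by
  induction n generalizing P r V s0 with
  | zero => simp [hVn]
  | succ n ih =>
    have h1 : ∀ s1, V 1 s1 = ∑ ψ : Fin n → S,
        (∑ x : Fin n, r (x.val+1) (traj s1 ψ x.castSucc) (traj s1 ψ x.succ)) *
        (∏ x : Fin n, P (x.val+1) (traj s1 ψ x.castSucc) (traj s1 ψ x.succ)) :=
      fun s1 => ih (fun t => P (t+1)) (fun t => r (t+1)) (fun t s => hP (t+1) s)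
        (fun t => V (t+1)) (fun s => hVn s)
        (fun t ht s => hV (t+1) (by omega) s) s1
    rw [hV 0 (by omega) s0, sum_cons_decomp]
    apply Finset.sum_congr rfl
    intro s1 _
    have hsum : (∑ ψ : Fin n → S,
        (∑ x : Fin (n+1), r x.val (traj s0 (Fin.cons s1 ψ) x.castSucc)
            (traj s0 (Fin.cons s1 ψ) x.succ)) *
        (∏ x : Fin (n+1), P x.val (traj s0 (Fin.cons s1 ψ) x.castSucc)
            (traj s0 (Fin.cons s1 ψ) x.succ)))
        = ∑ ψ : Fin n → S,
          (P 0 s0 s1 * r 0 s0 s1 *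
            (∏ x : Fin n, P (x.val+1) (traj s1 ψ x.castSucc) (traj s1 ψ x.succ)) +
           P 0 s0 s1 *
            ((∑ x : Fin n, r (x.val+1) (traj s1 ψ x.castSucc) (traj s1 ψ x.succ)) *
             (∏ x : Fin n, P (x.val+1) (traj s1 ψ x.castSucc) (traj s1 ψ x.succ)))) :=
      Finset.sum_congr rfl (fun ψ _ => by rw [sum_shift, prod_shift]; ring)
    rw [hsum, Finset.sum_add_distrib, ← Finset.mul_sum, ← Finset.mul_sum,
      prob_sum_one n (fun t => P (t+1)) (fun t s => hP (t+1) s) s1, ← h1 s1]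
    ring

theorem statement1
    {S A : Type} [Fintype S] [Nonempty S] [Fintype A] [Nonempty A]
    (h : ℕ)
    (T : S → A → S → ℝ) (R : S → A → S → ℝ)
    (hT0 : ∀ s a s', 0 ≤ T s a s')
    (hT1 : ∀ s a, ∑ s', T s a s' = 1)
    (π : ℕ → S → A)
    (V : ℕ → S → ℝ)
    (hVh : ∀ s, V h s = 0)
    (hV : ∀ t, t < h → ∀ s,
      V t s = ∑ s', T s (π t s) s' * (R s (π t s) s' + V (t + 1) s'))
    (s0 : S) :
    V 0 s0 =
      ∑ φ : Fin h → S,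
        (∑ x : Fin h, R (traj s0 φ x.castSucc) (π x.val (traj s0 φ x.castSucc))
            (traj s0 φ x.succ)) *
        (∏ x : Fin h, T (traj s0 φ x.castSucc) (π x.val (traj s0 φ x.castSucc))
            (traj s0 φ x.succ)) := by
  exact key h (fun t s s' => T s (π t s) s') (fun t s s' => R s (π t s) s')
    (fun t s => hT1 s (π t s)) V hVh hV s0
end

section
/- (Corollary A.1, two groups.) Consider a transition-independent multi-agent MDP whose agents are partitioned into two disjoint groups A and B, so S = S^A × S^B, actions A = A^A × A^B, and T(s,a,s') = T^A(s^A,a^A,s'^A)·T^B(s^B,a^B,s'^B). Suppose the reward has no interaction term: R(s,a,s') = R_A(s^A,a^A,s'^A) + R_B(s^B,a^B,s'^B), and the policy factors as π_t(s^A,s^B) = (π^A_t(s^A), π^B_t(s^B)). Then for all t ≤ h and all s = (s^A, s^B): V^π_t(s) = V^{π^A}_t(s^A) + V^{π^B}_t(s^B), where V^{π^A} is the value function of the group-A MDP (S^A, A^A, T^A, R_A) under π^A and V^{π^B} is defined analogously. -/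
/-!
STATEMENT 6 (Corollary A.1, two groups): in a transition-independent multi-agent MDP with
two disjoint agent groups `A` and `B`, factored transitions `T = T^A · T^B`, no
interaction reward (`R = R_A + R_B`) and a factored policy, the value function decouples:
`V^π_t(s^A, s^B) = V^{π^A}_t(s^A) + V^{π^B}_t(s^B)` for all `t ≤ h`.
-/
theorem statement6
    {SA SB AA AB : Type}
    [Fintype SA] [Nonempty SA] [Fintype SB] [Nonempty SB]
    [Fintype AA] [Nonempty AA] [Fintype AB] [Nonempty AB]
    (h : ℕ)
    (TA : SA → AA → SA → ℝ) (TB : SB → AB → SB → ℝ)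
    (hTA0 : ∀ x a y, 0 ≤ TA x a y) (hTA1 : ∀ x a, ∑ y, TA x a y = 1)
    (hTB0 : ∀ x a y, 0 ≤ TB x a y) (hTB1 : ∀ x a, ∑ y, TB x a y = 1)
    (RA : SA → AA → SA → ℝ) (RB : SB → AB → SB → ℝ)
    -- the policy factors into group-local policies
    (πA : ℕ → SA → AA) (πB : ℕ → SB → AB)
    -- the value function of the joint MDP under the joint policy
    (V : ℕ → SA × SB → ℝ)
    (hVh : ∀ s, V h s = 0)
    (hV : ∀ t, t < h → ∀ s : SA × SB,
      V t s = ∑ s' : SA × SB,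
        (TA s.1 (πA t s.1) s'.1 * TB s.2 (πB t s.2) s'.2) *
          ((RA s.1 (πA t s.1) s'.1 + RB s.2 (πB t s.2) s'.2) + V (t + 1) s'))
    -- the value function of the group-A MDP under `π^A`
    (VA : ℕ → SA → ℝ)
    (hVAh : ∀ x, VA h x = 0)
    (hVA : ∀ t, t < h → ∀ x,
      VA t x = ∑ x', TA x (πA t x) x' * (RA x (πA t x) x' + VA (t + 1) x'))
    -- the value function of the group-B MDP under `π^B`
    (VB : ℕ → SB → ℝ)
    (hVBh : ∀ y, VB h y = 0)
    (hVB : ∀ t, t < h → ∀ y,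
      VB t y = ∑ y', TB y (πB t y) y' * (RB y (πB t y) y' + VB (t + 1) y')) :
    ∀ t, t ≤ h → ∀ (sA : SA) (sB : SB), V t (sA, sB) = VA t sA + VB t sB := by
  suffices H : ∀ k t, h - t = k → t ≤ h → ∀ sA sB, V t (sA, sB) = VA t sA + VB t sB by
    intro t ht; exact H (h - t) t rfl ht
  intro k
  induction k with
  | zero =>
    intro t hk ht sA sB
    have : t = h := by omega
    subst this
    simp [hVh, hVAh, hVBh]
  | succ k ih =>
    intro t hk ht sA sB
    have htl : t < h := by omega
    have ih' := ih (t + 1) (by omega) (by omega)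
    rw [hV t htl, hVA t htl, hVB t htl, Fintype.sum_prod_type]
    have expand : ∀ x' y', TA sA (πA t sA) x' * TB sB (πB t sB) y' *
        ((RA sA (πA t sA) x' + RB sB (πB t sB) y') + V (t + 1) (x', y'))
      = TA sA (πA t sA) x' * (RA sA (πA t sA) x' + VA (t + 1) x') * TB sB (πB t sB) y'
      + TA sA (πA t sA) x' * (TB sB (πB t sB) y' * (RB sB (πB t sB) y' + VB (t + 1) y')) := by
      intro x' y'; rw [ih' x' y']; ring
    simp only [expand, Finset.sum_add_distrib, ← Finset.sum_mul, ← Finset.mul_sum,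
      hTA1, hTB1, mul_one, one_mul]
end

section
/- (Corollary A.1, general partition.) Consider a finite-horizon MDP whose state and action spaces factor over k disjoint groups, S = Π_{j=1}^{k} S^{(j)} and A = Π_{j=1}^{k} A^{(j)}, whose transition function factors as T(s,a,s') = Π_{j=1}^{k} T^{(j)}(s^{(j)},a^{(j)},s'^{(j)}) with each T^{(j)} nonnegative and normalized, whose reward decomposes with no cross-group terms as R(s,a,s') = Σ_{j=1}^{k} R_j(s^{(j)},a^{(j)},s'^{(j)}), and whose policy factors as π_t(s) = (π^{(1)}_t(s^{(1)}), …, π^{(k)}_t(s^{(k)})). Then for all t ≤ h and all s: V^π_t(s) = Σ_{j=1}^{k} V^{π^{(j)}}_t(s^{(j)}), where V^{π^{(j)}} is the value function of the group-j MDP (S^{(j)}, A^{(j)}, T^{(j)}, R_j) under policy π^{(j)}. -/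
/-!
STATEMENT 7 (Corollary A.1, general partition): in a finite-horizon MDP whose state and
action spaces factor over `k` disjoint groups (indexed by a finite type `J`), with
factored transitions `T(s,a,s') = Π_j T^(j)`, group-decomposed reward
`R(s,a,s') = Σ_j R_j`, and a policy that factors into group-local policies, the value
function decouples: `V^π_t(s) = Σ_j V^{π^(j)}_t(s^(j))` for all `t ≤ h`.
-/
open Finset in
lemma aux_key {J : Type} [Fintype J] [DecidableEq J] (S : J → Type)
    [∀ j, Fintype (S j)]
    (T' : (j : J) → S j → ℝ) (hT1 : ∀ j, ∑ x, T' j x = 1)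
    (j : J) (F : S j → ℝ) :
    ∑ s' : (i : J) → S i, (∏ i, T' i (s' i)) * F (s' j) = ∑ x, T' j x * F x := by
  classical
  set g : (i : J) → S i → ℝ := Function.update T' j (fun x => T' j x * F x) with hg
  have h1 : ∀ s' : (i : J) → S i, (∏ i, T' i (s' i)) * F (s' j) = ∏ i, g i (s' i) := by
    intro s'
    rw [← Finset.mul_prod_erase univ (fun i => T' i (s' i)) (mem_univ j),
        ← Finset.mul_prod_erase univ (fun i => g i (s' i)) (mem_univ j)]
    have hgj : g j (s' j) = T' j (s' j) * F (s' j) := by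
      simp [hg, Function.update_self]
    rw [hgj]
    rw [Finset.prod_congr rfl (fun i hi => ?_)]
    · ring
    · simp [hg, Function.update_of_ne (Finset.ne_of_mem_erase hi)]
  simp_rw [h1]
  rw [← Fintype.prod_sum g, ← Finset.mul_prod_erase univ (fun i => ∑ x, g i x) (mem_univ j)]
  have : ∀ i ∈ univ.erase j, ∑ x, g i x = 1 := by
    intro i hi
    rw [hg]
    simp [Function.update_of_ne (Finset.ne_of_mem_erase hi), hT1]
  rw [Finset.prod_congr rfl this, Finset.prod_const_one, mul_one]
  simp [hg, Function.update_self]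


theorem statement7
    {J : Type} [Fintype J] [DecidableEq J]
    (S : J → Type) (A : J → Type)
    [∀ j, Fintype (S j)] [∀ j, Nonempty (S j)]
    [∀ j, Fintype (A j)] [∀ j, Nonempty (A j)]
    (h : ℕ)
    (Tj : (j : J) → S j → A j → S j → ℝ)
    (hT0 : ∀ j x a y, 0 ≤ Tj j x a y)
    (hT1 : ∀ j x a, ∑ y, Tj j x a y = 1)
    (Rj : (j : J) → S j → A j → S j → ℝ)
    -- the policy factors into group-local policies
    (π : (j : J) → ℕ → S j → A j)
    -- the value function of the joint MDP under the joint policy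
    (V : ℕ → ((j : J) → S j) → ℝ)
    (hVh : ∀ s, V h s = 0)
    (hV : ∀ t, t < h → ∀ s : (j : J) → S j,
      V t s = ∑ s' : (j : J) → S j,
        (∏ j, Tj j (s j) (π j t (s j)) (s' j)) *
          ((∑ j, Rj j (s j) (π j t (s j)) (s' j)) + V (t + 1) s'))
    -- the value functions of the group MDPs under the local policies
    (Vj : (j : J) → ℕ → S j → ℝ)
    (hVjh : ∀ j x, Vj j h x = 0)
    (hVj : ∀ j, ∀ t, t < h → ∀ x,
      Vj j t x = ∑ x', Tj j x (π j t x) x' * (Rj j x (π j t x) x' + Vj j (t + 1) x')) :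
    ∀ t, t ≤ h → ∀ s : (j : J) → S j, V t s = ∑ j, Vj j t (s j) := by
  suffices H : ∀ d t, t + d = h → ∀ s : (j : J) → S j, V t s = ∑ j, Vj j t (s j) by
    intro t ht s
    exact H (h - t) t (by omega) s
  intro d
  induction d with
  | zero =>
    intro t ht s
    simp only [Nat.add_zero] at ht
    subst ht
    simp [hVh, hVjh]
  | succ d ih =>
    intro t ht s
    have htlt : t < h := by omega
    have ih' := ih (t + 1) (by omega)
    rw [hV t htlt s]
    have hrw : ∀ s' : (j : J) → S j,
        (∏ j, Tj j (s j) (π j t (s j)) (s' j)) *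
          ((∑ j, Rj j (s j) (π j t (s j)) (s' j)) + V (t + 1) s')
        = ∑ j, (∏ i, Tj i (s i) (π i t (s i)) (s' i)) *
            (Rj j (s j) (π j t (s j)) (s' j) + Vj j (t + 1) (s' j)) := by
      intro s'
      rw [ih' s', ← Finset.sum_add_distrib, Finset.mul_sum]
    simp_rw [hrw]
    rw [Finset.sum_comm]
    refine Finset.sum_congr rfl (fun j _ => ?_)
    rw [aux_key S (fun i => Tj i (s i) (π i t (s i))) (fun i => hT1 i (s i) _) j
        (fun x => Rj j (s j) (π j t (s j)) x + Vj j (t + 1) x)]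
    exact (hVj j t htlt (s j)).symm
end

section
/- (Optimality of combined local policies.) In a finite-horizon MDP factored over k disjoint groups with factored transitions T(s,a,s') = Π_j T^{(j)}(s^{(j)},a^{(j)},s'^{(j)}) and group-decomposed reward R(s,a,s') = Σ_j R_j(s^{(j)},a^{(j)},s'^{(j)}), suppose for each group j that π^{(j)} is a policy of the group-j MDP (S^{(j)}, A^{(j)}, T^{(j)}, R_j) whose value function equals the optimal value function of that group MDP: V^{π^{(j)}}_t(x) = V*_{j,t}(x) for all t ≤ h and x ∈ S^{(j)}. Then the combined joint policy π defined by π_t(s) = (π^{(1)}_t(s^{(1)}), …, π^{(k)}_t(s^{(k)})) is optimal for the joint MDP: V^π_t(s) = V*_t(s) for all t ≤ h and all s ∈ S. -/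
section Aux

variable {J : Type} [Fintype J] [DecidableEq J]
    {S : J → Type} [∀ j, Fintype (S j)]

/-- Key factorization: sum over the product space of a product of local transition
probabilities times a function of one coordinate. -/
lemma aux_factor (Tf : (j : J) → S j → ℝ) (hT1 : ∀ j, ∑ y, Tf j y = 1)
    (j : J) (g : S j → ℝ) :
    ∑ s' : (i : J) → S i, (∏ i, Tf i (s' i)) * g (s' j)
      = ∑ x', Tf j x' * g x' := by
  classical
  set F : (i : J) → S i → ℝ := Function.update (fun i x => Tf i x) j (fun x => Tf j x * g x)
    with hF
  have hprod : ∀ s' : (i : J) → S i,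
      (∏ i, Tf i (s' i)) * g (s' j) = ∏ i, F i (s' i) := by
    intro s'
    rw [← Finset.prod_erase_mul Finset.univ _ (Finset.mem_univ j),
        ← Finset.prod_erase_mul Finset.univ _ (Finset.mem_univ j)]
    have h1 : ∀ i ∈ Finset.univ.erase j, F i (s' i) = Tf i (s' i) := by
      intro i hi
      rw [hF, Function.update_of_ne (Finset.ne_of_mem_erase hi)]
    rw [Finset.prod_congr rfl h1, hF, Function.update_self, mul_assoc]
  calc ∑ s' : (i : J) → S i, (∏ i, Tf i (s' i)) * g (s' j)
      = ∑ s' : (i : J) → S i, ∏ i, F i (s' i) := by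
        exact Finset.sum_congr rfl fun s' _ => hprod s'
    _ = ∏ i, ∑ x, F i x := (Fintype.prod_sum F).symm
    _ = ∑ x', Tf j x' * g x' := by
        rw [← Finset.prod_erase_mul Finset.univ _ (Finset.mem_univ j)]
        have h1 : ∀ i ∈ Finset.univ.erase j, (∑ x, F i x) = 1 := by
          intro i hi
          rw [hF]
          have : ∀ x, Function.update (fun i x => Tf i x) j (fun x => Tf j x * g x) i x
              = Tf i x := fun x => by
            rw [Function.update_of_ne (Finset.ne_of_mem_erase hi)]
          simp only [this]; exact hT1 i
        rw [Finset.prod_congr rfl h1, Finset.prod_const_one, one_mul, hF,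
          Function.update_self]

/-- Supremum over joint actions of a sum of per-coordinate functions. -/
lemma aux_sup {A : J → Type} [∀ j, Fintype (A j)] [∀ j, Nonempty (A j)]
    (g : (j : J) → A j → ℝ) :
    (⨆ a : (j : J) → A j, ∑ j, g j (a j)) = ∑ j, ⨆ b, g j b := by
  have bdd : ∀ j, BddAbove (Set.range (g j)) := fun j =>
    (Set.finite_range _).bddAbove
  apply le_antisymm
  · apply ciSup_le
    intro a
    exact Finset.sum_le_sum fun j _ => le_ciSup (bdd j) (a j)
  · have hmax : ∀ j, ∃ b : A j, ∀ b', g j b' ≤ g j b := fun j =>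
      Finite.exists_max (g j)
    choose a ha using hmax
    have : ∀ j, (⨆ b, g j b) = g j (a j) := fun j =>
      le_antisymm (ciSup_le (ha j)) (le_ciSup (bdd j) (a j))
    calc ∑ j, ⨆ b, g j b = ∑ j, g j (a j) := by
          exact Finset.sum_congr rfl fun j _ => this j
      _ ≤ ⨆ a' : (j : J) → A j, ∑ j, g j (a' j) :=
          le_ciSup (f := fun a' : (j : J) → A j => ∑ j, g j (a' j))
            ((Set.finite_range _).bddAbove) a

end Aux

/-!
STATEMENT 9 (optimality of combined local policies): in a finite-horizon MDP factored
over `k` disjoint groups (indexed by a finite type `J`) with factored transitions and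
group-decomposed reward, if for each group `j` the local policy `π^(j)` is optimal for
the group-`j` MDP (its value function `V^{π^(j)}` equals the group optimal value function
`V*_j`), then the combined joint policy `π_t(s) = (π^(1)_t(s^(1)), …, π^(k)_t(s^(k)))` is
optimal for the joint MDP: `V^π_t(s) = V*_t(s)` for all `t ≤ h` and all `s`.
-/
theorem statement9
    {J : Type} [Fintype J] [DecidableEq J]
    (S : J → Type) (A : J → Type)
    [∀ j, Fintype (S j)] [∀ j, Nonempty (S j)]
    [∀ j, Fintype (A j)] [∀ j, Nonempty (A j)]
    (h : ℕ)
    (Tj : (j : J) → S j → A j → S j → ℝ)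
    (hT0 : ∀ j x a y, 0 ≤ Tj j x a y)
    (hT1 : ∀ j x a, ∑ y, Tj j x a y = 1)
    (Rj : (j : J) → S j → A j → S j → ℝ)
    -- group-local policies
    (π : (j : J) → ℕ → S j → A j)
    -- the value function of the group-j MDP under π^(j)
    (Vpij : (j : J) → ℕ → S j → ℝ)
    (hVpijh : ∀ j x, Vpij j h x = 0)
    (hVpij : ∀ j, ∀ t, t < h → ∀ x,
      Vpij j t x = ∑ x', Tj j x (π j t x) x' * (Rj j x (π j t x) x' + Vpij j (t + 1) x'))
    -- the optimal value function of the group-j MDP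
    (Vstarj : (j : J) → ℕ → S j → ℝ)
    (hVstarjh : ∀ j x, Vstarj j h x = 0)
    (hVstarj : ∀ j, ∀ t, t < h → ∀ x,
      Vstarj j t x = ⨆ b : A j,
        ∑ x', Tj j x b x' * (Rj j x b x' + Vstarj j (t + 1) x'))
    -- each local policy is optimal for its group MDP
    (hopt : ∀ j, ∀ t, t ≤ h → ∀ x : S j, Vpij j t x = Vstarj j t x)
    -- the value function of the joint MDP under the combined joint policy
    (V : ℕ → ((j : J) → S j) → ℝ)
    (hVh : ∀ s, V h s = 0)
    (hV : ∀ t, t < h → ∀ s : (j : J) → S j,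
      V t s = ∑ s' : (j : J) → S j,
        (∏ j, Tj j (s j) (π j t (s j)) (s' j)) *
          ((∑ j, Rj j (s j) (π j t (s j)) (s' j)) + V (t + 1) s'))
    -- the optimal value function of the joint MDP
    (Vstar : ℕ → ((j : J) → S j) → ℝ)
    (hVstarh : ∀ s, Vstar h s = 0)
    (hVstar : ∀ t, t < h → ∀ s : (j : J) → S j,
      Vstar t s = ⨆ a : (j : J) → A j,
        ∑ s' : (j : J) → S j,
          (∏ j, Tj j (s j) (a j) (s' j)) *
            ((∑ j, Rj j (s j) (a j) (s' j)) + Vstar (t + 1) s')) :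
    ∀ t, t ≤ h → ∀ s : (j : J) → S j, V t s = Vstar t s := by
  classical
  -- the one-step expected value under a joint action decomposes
  have key : ∀ (a : (j : J) → A j) (s : (j : J) → S j) (W : (j : J) → S j → ℝ),
      (∑ s' : (j : J) → S j,
        (∏ j, Tj j (s j) (a j) (s' j)) *
          ((∑ j, Rj j (s j) (a j) (s' j)) + ∑ j, W j (s' j)))
      = ∑ j, ∑ x', Tj j (s j) (a j) x' * (Rj j (s j) (a j) x' + W j x') := by
    intro a s W
    have step1 : ∀ s' : (j : J) → S j,
        (∏ j, Tj j (s j) (a j) (s' j)) *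
          ((∑ j, Rj j (s j) (a j) (s' j)) + ∑ j, W j (s' j))
        = ∑ j, (∏ i, Tj i (s i) (a i) (s' i)) *
            (Rj j (s j) (a j) (s' j) + W j (s' j)) := by
      intro s'
      rw [← Finset.sum_add_distrib, Finset.mul_sum]
    rw [Finset.sum_congr rfl fun s' _ => step1 s', Finset.sum_comm]
    refine Finset.sum_congr rfl fun j _ => ?_
    exact aux_factor (fun i x => Tj i (s i) (a i) x) (fun i => hT1 i (s i) (a i)) j
      (fun x => Rj j (s j) (a j) x + W j x)
  -- main claim by downward induction
  suffices H : ∀ n t, t + n = h →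
      (∀ s : (j : J) → S j, V t s = ∑ j, Vpij j t (s j)) ∧
      (∀ s : (j : J) → S j, Vstar t s = ∑ j, Vstarj j t (s j)) by
    intro t ht s
    obtain ⟨n, hn⟩ := Nat.le.dest ht
    obtain ⟨h1, h2⟩ := H n t hn
    rw [h1 s, h2 s]
    exact Finset.sum_congr rfl fun j _ => hopt j t ht (s j)
  intro n
  induction n with
  | zero =>
    intro t ht
    simp only [Nat.add_zero] at ht
    subst ht
    constructor
    · intro s; rw [hVh]; simp [hVpijh]
    · intro s; rw [hVstarh]; simp [hVstarjh]
  | succ n ih =>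
    intro t ht
    have ht' : t < h := by omega
    have ht1 : t + 1 + n = h := by omega
    obtain ⟨ih1, ih2⟩ := ih (t + 1) ht1
    constructor
    · intro s
      rw [hV t ht' s]
      have : ∀ s' : (j : J) → S j, V (t + 1) s' = ∑ j, Vpij j (t + 1) (s' j) := ih1
      simp_rw [this]
      rw [key (fun j => π j t (s j)) s (fun j => Vpij j (t + 1))]
      exact Finset.sum_congr rfl fun j _ => (hVpij j t ht' (s j)).symm
    · intro s
      rw [hVstar t ht' s]
      have heq : ∀ a : (j : J) → A j,
          (∑ s' : (j : J) → S j,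
            (∏ j, Tj j (s j) (a j) (s' j)) *
              ((∑ j, Rj j (s j) (a j) (s' j)) + Vstar (t + 1) s'))
          = ∑ j, ∑ x', Tj j (s j) (a j) x' *
              (Rj j (s j) (a j) x' + Vstarj j (t + 1) x') := by
        intro a
        simp_rw [ih2]
        exact key a s (fun j => Vstarj j (t + 1))
      simp_rw [heq]
      rw [aux_sup (fun j b => ∑ x', Tj j (s j) b x' *
        (Rj j (s j) b x' + Vstarj j (t + 1) x'))]
      exact Finset.sum_congr rfl fun j _ => (hVstarj j t ht' (s j)).symm
end

section
/- (Lemma A.2, upper bound admissibility.) Consider a transition-independent multi-agent MDP over agent set N with reward partitioned as R(s,a,s') = Σ_{i∈N} R_i(s,a,s') for arbitrary functions R_i : S × A × S → ℝ. For each agent i define U_i : {0,…,h} × S^i → ℝ by U_i(h, x) = 0 and, for t < h, U_i(t, x) = max over all (s,a,s') ∈ S × A × S with s^i = x and T(s,a,s') > 0 of [R_i(s,a,s') + U_i(t+1, s'^i)]. Then for all t ≤ h and all s ∈ S, the optimal value is bounded: V*_t(s) ≤ Σ_{i∈N} U_i(t, s^i). -/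
/-!
STATEMENT 10 (Lemma A.2, upper bound admissibility): in a transition-independent
multi-agent MDP with reward partitioned as `R = Σ_{i∈N} R_i`, define for each agent `i`
the recursive upper bound `U_i(h, ·) = 0` and, for `t < h`,
`U_i(t, x) = max over (s,a,s') with s^i = x and T(s,a,s') > 0 of
R_i(s,a,s') + U_i(t+1, s'^i)` (expressed with `⨆` over the finite nonempty subtype).
Then the optimal value is bounded: `V*_t(s) ≤ Σ_{i∈N} U_i(t, s^i)` for all `t ≤ h`.
-/
theorem statement10
    {N : Type} [Fintype N] [DecidableEq N]
    (S : N → Type) (A : N → Type)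
    [∀ i, Fintype (S i)] [∀ i, Nonempty (S i)]
    [∀ i, Fintype (A i)] [∀ i, Nonempty (A i)]
    (h : ℕ)
    (Ti : (i : N) → S i → A i → S i → ℝ)
    (hTi0 : ∀ i x a y, 0 ≤ Ti i x a y)
    (hTi1 : ∀ i x a, ∑ y, Ti i x a y = 1)
    -- the factored joint transition function
    (T : ((i : N) → S i) → ((i : N) → A i) → ((i : N) → S i) → ℝ)
    (hT : ∀ s a s', T s a s' = ∏ i, Ti i (s i) (a i) (s' i))
    -- the reward, partitioned over the agents
    (R : ((i : N) → S i) → ((i : N) → A i) → ((i : N) → S i) → ℝ)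
    (Ri : N → ((i : N) → S i) → ((i : N) → A i) → ((i : N) → S i) → ℝ)
    (hR : ∀ s a s', R s a s' = ∑ i, Ri i s a s')
    -- the recursive upper-bound functions
    (U : (i : N) → ℕ → S i → ℝ)
    (hUh : ∀ i x, U i h x = 0)
    (hU : ∀ t, t < h → ∀ (i : N) (x : S i),
      U i t x = ⨆ p : {p : ((i : N) → S i) × ((i : N) → A i) × ((i : N) → S i) //
          p.1 i = x ∧ 0 < T p.1 p.2.1 p.2.2},
        (Ri i p.1.1 p.1.2.1 p.1.2.2 + U i (t + 1) (p.1.2.2 i)))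
    -- the optimal value function
    (Vstar : ℕ → ((i : N) → S i) → ℝ)
    (hVh : ∀ s, Vstar h s = 0)
    (hV : ∀ t, t < h → ∀ s,
      Vstar t s = ⨆ a : (i : N) → A i,
        ∑ s', T s a s' * (R s a s' + Vstar (t + 1) s')) :
    ∀ t, t ≤ h → ∀ s : (i : N) → S i, Vstar t s ≤ ∑ i, U i t (s i) := by
  have hT0 : ∀ s a s', 0 ≤ T s a s' := by
    intro s a s'
    rw [hT]
    exact Finset.prod_nonneg fun i _ => hTi0 i _ _ _
  have hTsum : ∀ s a, ∑ s', T s a s' = 1 := by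
    intro s a
    simp_rw [hT]
    rw [← Fintype.prod_sum]
    simp [hTi1]
  suffices H : ∀ d t, h - t = d → t ≤ h → ∀ s, Vstar t s ≤ ∑ i, U i t (s i) by
    intro t ht s; exact H (h - t) t rfl ht s
  intro d
  induction d with
  | zero =>
    intro t hd ht s
    have : t = h := le_antisymm ht (Nat.le_of_sub_eq_zero hd)
    subst this
    simp [hVh, hUh]
  | succ d ih =>
    intro t hd ht s
    have htlt : t < h := by omega
    have hd' : h - (t + 1) = d := by omega
    have ht' : t + 1 ≤ h := htlt
    rw [hV t htlt s]
    apply ciSup_le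
    intro a
    calc ∑ s', T s a s' * (R s a s' + Vstar (t + 1) s')
        ≤ ∑ s', T s a s' * (∑ i, (Ri i s a s' + U i (t + 1) (s' i))) := by
          apply Finset.sum_le_sum
          intro s' _
          apply mul_le_mul_of_nonneg_left _ (hT0 s a s')
          rw [hR, Finset.sum_add_distrib]
          exact add_le_add le_rfl (ih (t + 1) hd' htlt s')
      _ = ∑ i, ∑ s', T s a s' * (Ri i s a s' + U i (t + 1) (s' i)) := by
          rw [Finset.sum_comm]
          simp [Finset.mul_sum]
      _ ≤ ∑ i, U i t (s i) := by
          apply Finset.sum_le_sum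
          intro i _
          have hbdd : BddAbove (Set.range fun p : {p : ((i : N) → S i) × ((i : N) → A i) × ((i : N) → S i) //
              p.1 i = s i ∧ 0 < T p.1 p.2.1 p.2.2} =>
              Ri i p.1.1 p.1.2.1 p.1.2.2 + U i (t + 1) (p.1.2.2 i)) :=
            Set.Finite.bddAbove (Set.finite_range _)
          calc ∑ s', T s a s' * (Ri i s a s' + U i (t + 1) (s' i))
              ≤ ∑ s', T s a s' * U i t (s i) := by
                apply Finset.sum_le_sum
                intro s' _
                by_cases hp : 0 < T s a s'
                · apply mul_le_mul_of_nonneg_left _ (hT0 s a s')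
                  rw [hU t htlt i (s i)]
                  exact le_ciSup hbdd ⟨(s, a, s'), rfl, hp⟩
                · have : T s a s' = 0 := le_antisymm (not_lt.mp hp) (hT0 s a s')
                  simp [this]
            _ = U i t (s i) := by
                rw [← Finset.sum_mul, hTsum, one_mul]
end

section
/- (Lemma A.2, lower bound admissibility.) Consider a transition-independent multi-agent MDP over agent set N with reward partitioned as R(s,a,s') = Σ_{i∈N} R_i(s,a,s') for arbitrary functions R_i : S × A × S → ℝ. For each agent i define L_i : {0,…,h} × S^i → ℝ by L_i(h, x) = 0 and, for t < h, L_i(t, x) = min over all (s,a,s') ∈ S × A × S with s^i = x and T(s,a,s') > 0 of [R_i(s,a,s') + L_i(t+1, s'^i)]. Then for every deterministic Markov policy π, all t ≤ h and all s ∈ S: Σ_{i∈N} L_i(t, s^i) ≤ V^π_t(s); in particular Σ_{i∈N} L_i(t, s^i) ≤ V*_t(s). -/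
/-!
STATEMENT 11 (Lemma A.2, lower bound admissibility): in a transition-independent
multi-agent MDP with reward partitioned as `R = Σ_{i∈N} R_i`, define for each agent `i`
the recursive lower bound `L_i(h, ·) = 0` and, for `t < h`,
`L_i(t, x) = min over (s,a,s') with s^i = x and T(s,a,s') > 0 of
R_i(s,a,s') + L_i(t+1, s'^i)` (expressed with `⨅` over the finite nonempty subtype).
Then for every deterministic Markov policy `π`, `Σ_{i∈N} L_i(t, s^i) ≤ V^π_t(s)`, and in
particular `Σ_{i∈N} L_i(t, s^i) ≤ V*_t(s)`, for all `t ≤ h` and all `s`.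
-/
theorem statement11
    {N : Type} [Fintype N] [DecidableEq N]
    (S : N → Type) (A : N → Type)
    [∀ i, Fintype (S i)] [∀ i, Nonempty (S i)]
    [∀ i, Fintype (A i)] [∀ i, Nonempty (A i)]
    (h : ℕ)
    (Ti : (i : N) → S i → A i → S i → ℝ)
    (hTi0 : ∀ i x a y, 0 ≤ Ti i x a y)
    (hTi1 : ∀ i x a, ∑ y, Ti i x a y = 1)
    -- the factored joint transition function
    (T : ((i : N) → S i) → ((i : N) → A i) → ((i : N) → S i) → ℝ)
    (hT : ∀ s a s', T s a s' = ∏ i, Ti i (s i) (a i) (s' i))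
    -- the reward, partitioned over the agents
    (R : ((i : N) → S i) → ((i : N) → A i) → ((i : N) → S i) → ℝ)
    (Ri : N → ((i : N) → S i) → ((i : N) → A i) → ((i : N) → S i) → ℝ)
    (hR : ∀ s a s', R s a s' = ∑ i, Ri i s a s')
    -- the recursive lower-bound functions
    (L : (i : N) → ℕ → S i → ℝ)
    (hLh : ∀ i x, L i h x = 0)
    (hL : ∀ t, t < h → ∀ (i : N) (x : S i),
      L i t x = ⨅ p : {p : ((i : N) → S i) × ((i : N) → A i) × ((i : N) → S i) //
          p.1 i = x ∧ 0 < T p.1 p.2.1 p.2.2},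
        (Ri i p.1.1 p.1.2.1 p.1.2.2 + L i (t + 1) (p.1.2.2 i)))
    -- a deterministic Markov policy and its value function
    (π : ℕ → ((i : N) → S i) → ((i : N) → A i))
    (V : ℕ → ((i : N) → S i) → ℝ)
    (hVpih : ∀ s, V h s = 0)
    (hVpi : ∀ t, t < h → ∀ s,
      V t s = ∑ s', T s (π t s) s' * (R s (π t s) s' + V (t + 1) s'))
    -- the optimal value function
    (Vstar : ℕ → ((i : N) → S i) → ℝ)
    (hVh : ∀ s, Vstar h s = 0)
    (hV : ∀ t, t < h → ∀ s,
      Vstar t s = ⨆ a : (i : N) → A i,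
        ∑ s', T s a s' * (R s a s' + Vstar (t + 1) s')) :
    ∀ t, t ≤ h → ∀ s : (i : N) → S i,
      (∑ i, L i t (s i)) ≤ V t s ∧ (∑ i, L i t (s i)) ≤ Vstar t s := by

  -- basic facts about T
  have hTnn : ∀ s a s', 0 ≤ T s a s' := by
    intro s a s'
    rw [hT]
    exact Finset.prod_nonneg (fun i _ => hTi0 i _ _ _)
  have hTsum : ∀ s a, ∑ s', T s a s' = 1 := by
    intro s a
    calc ∑ s', T s a s'
        = ∑ s' ∈ Fintype.piFinset (fun _ => Finset.univ),
            ∏ i, Ti i (s i) (a i) (s' i) := by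
          rw [Fintype.piFinset_univ]
          exact Finset.sum_congr rfl (fun s' _ => hT s a s')
      _ = ∏ i, ∑ y, Ti i (s i) (a i) y := (Finset.prod_univ_sum _ _).symm
      _ = 1 := by simp [hTi1]
  -- key per-agent inequality
  have hLle : ∀ t, t < h → ∀ (i : N) (s : (j : N) → S j) (a : (j : N) → A j)
      (s' : (j : N) → S j), 0 < T s a s' →
      L i t (s i) ≤ Ri i s a s' + L i (t + 1) (s' i) := by
    intro t ht i s a s' hpos
    rw [hL t ht i (s i)]
    exact ciInf_le
      (f := fun p : {p : ((j : N) → S j) × ((j : N) → A j) × ((j : N) → S j) //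
          p.1 i = s i ∧ 0 < T p.1 p.2.1 p.2.2} =>
        Ri i p.1.1 p.1.2.1 p.1.2.2 + L i (t + 1) (p.1.2.2 i))
      (Set.Finite.bddBelow (Set.finite_range _))
      (⟨⟨s, a, s'⟩, rfl, hpos⟩ : {p : ((j : N) → S j) × ((j : N) → A j) × ((j : N) → S j) //
          p.1 i = s i ∧ 0 < T p.1 p.2.1 p.2.2})
  -- core step: for any action a and any value bound W at t+1
  have key : ∀ t, t < h → ∀ (s : (j : N) → S j) (a : (j : N) → A j)
      (W : ((j : N) → S j) → ℝ),
      (∀ s', (∑ i, L i (t + 1) (s' i)) ≤ W s') →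
      (∑ i, L i t (s i)) ≤ ∑ s', T s a s' * (R s a s' + W s') := by
    intro t ht s a W hW
    have h1 : (∑ i, L i t (s i)) = ∑ s', T s a s' * (∑ i, L i t (s i)) := by
      rw [← Finset.sum_mul, hTsum, one_mul]
    rw [h1]
    apply Finset.sum_le_sum
    intro s' _
    rcases eq_or_lt_of_le (hTnn s a s') with heq | hpos
    · rw [← heq]; simp
    · apply mul_le_mul_of_nonneg_left _ (le_of_lt hpos)
      calc (∑ i, L i t (s i))
          ≤ ∑ i, (Ri i s a s' + L i (t + 1) (s' i)) :=
            Finset.sum_le_sum (fun i _ => hLle t ht i s a s' hpos)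
        _ = R s a s' + ∑ i, L i (t + 1) (s' i) := by
            rw [Finset.sum_add_distrib, hR]
        _ ≤ R s a s' + W s' := by linarith [hW s']
  -- downward induction via distance to horizon
  have main : ∀ d t, t + d = h → ∀ s : (i : N) → S i,
      (∑ i, L i t (s i)) ≤ V t s ∧ (∑ i, L i t (s i)) ≤ Vstar t s := by
    intro d
    induction d with
    | zero =>
        intro t ht s
        rw [Nat.add_zero] at ht
        subst ht
        simp [hLh, hVpih, hVh]
    | succ d ih =>
        intro t ht s
        have htlt : t < h := by omega
        have ih' := ih (t + 1) (by omega)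
        constructor
        · rw [hVpi t htlt s]
          exact key t htlt s (π t s) (V (t + 1)) (fun s' => (ih' s').1)
        · rw [hV t htlt s]
          have hb : ∀ a : (i : N) → A i,
              (∑ i, L i t (s i)) ≤ ∑ s', T s a s' * (R s a s' + Vstar (t + 1) s') :=
            fun a => key t htlt s a (Vstar (t + 1)) (fun s' => (ih' s').2)
          exact le_ciSup_of_le (Set.Finite.bddAbove (Set.finite_range _))
            (Classical.arbitrary _) (hb _)
  intro t ht s
  exact main (h - t) t (by omega) s
end

section
/- (Admissible state-action bounds.) In a transition-independent multi-agent MDP with reward partitioned as R = Σ_{i∈N} R_i, let U_i and L_i be the recursive upper- and lower-bound functions (U_i(h,·) = L_i(h,·) = 0; U_i(t,x) = max, and L_i(t,x) = min, over all (s,a,s') with s^i = x and T(s,a,s') > 0 of R_i(s,a,s') + U_i(t+1,s'^i), respectively R_i(s,a,s') + L_i(t+1,s'^i)). Define the optimal state-action value Q*_t(s,a) = Σ_{s'∈S} T(s,a,s')·(R(s,a,s') + V*_{t+1}(s')) for t < h. Then for every t < h, s ∈ S, a ∈ A: Σ_{s'} T(s,a,s')·(R(s,a,s') + Σ_{i∈N}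 L_i(t+1, s'^i)) ≤ Q*_t(s,a) ≤ Σ_{s'} T(s,a,s')·(R(s,a,s') + Σ_{i∈N} U_i(t+1, s'^i)). -/
/-!
Backward induction on `t` shows `∑ i, L i t (s i) ≤ V*_t(s) ≤ ∑ i, U i t (s i)`: when
`T(s,a,s') > 0` the triple `(s,a,s')` is admissible in the extremum defining every `U_i(t, s^i)`,
so `R(s,a,s') + ∑ i, U_i(t+1, s'^i) ≤ ∑ i, U_i(t, s^i)`, and averaging against the
probability distribution `T(s,a,·)` preserves this bound (dually for `L`). The bounds on
`Q*_t` are the same averaging applied once more to the bounds on `V*_{t+1}`.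
-/

open Finset

theorem Finset.sum_mul_le_sum_mul_of_pos {ι 𝕜 : Type*} [Semiring 𝕜] [PartialOrder 𝕜]
    [IsOrderedRing 𝕜] (s : Finset ι) {w f g : ι → 𝕜}
    (hw : ∀ x, 0 ≤ w x) (hfg : ∀ x, 0 < w x → f x ≤ g x) :
    ∑ x ∈ s, w x * f x ≤ ∑ x ∈ s, w x * g x := by
  refine sum_le_sum fun x _ => ?_
  rcases (hw x).eq_or_lt with hx | hx
  · simp [← hx]
  · exact mul_le_mul_of_nonneg_left (hfg x hx) hx.le

theorem Fintype.sum_prod_eq_one {ι 𝕜 : Type*} [CommSemiring 𝕜] [Fintype ι] [DecidableEq ι]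
    {X : ι → Type*} [∀ i, Fintype (X i)] (P : ∀ i, X i → 𝕜) (hP : ∀ i, ∑ y, P i y = 1) :
    ∑ x : ∀ i, X i, ∏ i, P i (x i) = 1 := by
  rw [← Fintype.prod_sum]
  simp [hP]

section BoundFunctions

variable {N : Type} [Fintype N] {S : N → Type} [∀ i, Fintype (S i)]
  {Act : Type} [Fintype Act] {h : ℕ}
  {T R : ((i : N) → S i) → Act → ((i : N) → S i) → ℝ}
  {Ri : N → ((i : N) → S i) → Act → ((i : N) → S i) → ℝ}

theorem reward_add_sum_upper_le_sum_upper (hR : ∀ s a s', R s a s' = ∑ i, Ri i s a s')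
    {U : (i : N) → ℕ → S i → ℝ} {t : ℕ}
    (hU : ∀ (i : N) (x : S i),
      U i t x = ⨆ p : {p : ((i : N) → S i) × Act × ((i : N) → S i) //
          p.1 i = x ∧ 0 < T p.1 p.2.1 p.2.2},
        (Ri i p.1.1 p.1.2.1 p.1.2.2 + U i (t + 1) (p.1.2.2 i)))
    {s s' : (i : N) → S i} {a : Act} (hpos : 0 < T s a s') :
    R s a s' + ∑ i, U i (t + 1) (s' i) ≤ ∑ i, U i t (s i) := by
  rw [hR, ← sum_add_distrib]
  refine sum_le_sum fun i _ => ?_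
  rw [hU]
  exact le_ciSup_of_le (Finite.bddAbove_range _) ⟨(s, a, s'), rfl, hpos⟩ le_rfl

theorem sum_lower_le_reward_add_sum_lower (hR : ∀ s a s', R s a s' = ∑ i, Ri i s a s')
    {L : (i : N) → ℕ → S i → ℝ} {t : ℕ}
    (hL : ∀ (i : N) (x : S i),
      L i t x = ⨅ p : {p : ((i : N) → S i) × Act × ((i : N) → S i) //
          p.1 i = x ∧ 0 < T p.1 p.2.1 p.2.2},
        (Ri i p.1.1 p.1.2.1 p.1.2.2 + L i (t + 1) (p.1.2.2 i)))
    {s s' : (i : N) → S i} {a : Act} (hpos : 0 < T s a s') :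
    ∑ i, L i t (s i) ≤ R s a s' + ∑ i, L i (t + 1) (s' i) := by
  rw [hR, ← sum_add_distrib]
  refine sum_le_sum fun i _ => ?_
  rw [hL]
  exact ciInf_le_of_le (Finite.bddBelow_range _) ⟨(s, a, s'), rfl, hpos⟩ le_rfl

variable [DecidableEq N] {Vstar : ℕ → ((i : N) → S i) → ℝ}

theorem value_le_sum_upper (hT0 : ∀ s a s', 0 ≤ T s a s') (hT1 : ∀ s a, ∑ s', T s a s' = 1)
    (hR : ∀ s a s', R s a s' = ∑ i, Ri i s a s')
    {U : (i : N) → ℕ → S i → ℝ} (hUh : ∀ i x, U i h x = 0)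
    (hU : ∀ t, t < h → ∀ (i : N) (x : S i),
      U i t x = ⨆ p : {p : ((i : N) → S i) × Act × ((i : N) → S i) //
          p.1 i = x ∧ 0 < T p.1 p.2.1 p.2.2},
        (Ri i p.1.1 p.1.2.1 p.1.2.2 + U i (t + 1) (p.1.2.2 i)))
    [Nonempty Act] (hVh : ∀ s, Vstar h s = 0)
    (hV : ∀ t, t < h → ∀ s,
      Vstar t s = ⨆ a : Act, ∑ s', T s a s' * (R s a s' + Vstar (t + 1) s'))
    {t : ℕ} (ht : t ≤ h) (s : (i : N) → S i) :
    Vstar t s ≤ ∑ i, U i t (s i) := by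
  induction ht using Nat.decreasingInduction generalizing s with
  | self => simp [hVh, hUh]
  | of_succ t ht ih =>
    rw [hV t ht]
    refine ciSup_le fun a => ?_
    calc ∑ s', T s a s' * (R s a s' + Vstar (t + 1) s')
        ≤ ∑ s', T s a s' * ∑ i, U i t (s i) :=
          sum_mul_le_sum_mul_of_pos _ (hT0 s a) fun s' hpos =>
            (add_le_add_right (ih s') _).trans
              (reward_add_sum_upper_le_sum_upper hR (hU t ht) hpos)
      _ = ∑ i, U i t (s i) := by rw [← sum_mul, hT1, one_mul]

theorem sum_lower_le_value (hT0 : ∀ s a s', 0 ≤ T s a s') (hT1 : ∀ s a, ∑ s', T s a s' = 1)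
    (hR : ∀ s a s', R s a s' = ∑ i, Ri i s a s')
    {L : (i : N) → ℕ → S i → ℝ} (hLh : ∀ i x, L i h x = 0)
    (hL : ∀ t, t < h → ∀ (i : N) (x : S i),
      L i t x = ⨅ p : {p : ((i : N) → S i) × Act × ((i : N) → S i) //
          p.1 i = x ∧ 0 < T p.1 p.2.1 p.2.2},
        (Ri i p.1.1 p.1.2.1 p.1.2.2 + L i (t + 1) (p.1.2.2 i)))
    [Nonempty Act] (hVh : ∀ s, Vstar h s = 0)
    (hV : ∀ t, t < h → ∀ s,
      Vstar t s = ⨆ a : Act, ∑ s', T s a s' * (R s a s' + Vstar (t + 1) s'))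
    {t : ℕ} (ht : t ≤ h) (s : (i : N) → S i) :
    ∑ i, L i t (s i) ≤ Vstar t s := by
  induction ht using Nat.decreasingInduction generalizing s with
  | self => simp [hVh, hLh]
  | of_succ t ht ih =>
    obtain ⟨a⟩ := ‹Nonempty Act›
    rw [hV t ht]
    calc ∑ i, L i t (s i)
        = ∑ s', T s a s' * ∑ i, L i t (s i) := by rw [← sum_mul, hT1, one_mul]
      _ ≤ ∑ s', T s a s' * (R s a s' + Vstar (t + 1) s') :=
          sum_mul_le_sum_mul_of_pos _ (hT0 s a) fun s' hpos =>
            (sum_lower_le_reward_add_sum_lower hR (hL t ht) hpos).trans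
              (add_le_add_right (ih s') _)
      _ ≤ ⨆ a : Act, ∑ s', T s a s' * (R s a s' + Vstar (t + 1) s') :=
          le_ciSup_of_le (Finite.bddAbove_range _) a le_rfl

end BoundFunctions

theorem statement12_general
    {N : Type} [Fintype N] [DecidableEq N]
    (S : N → Type) (A : N → Type)
    [∀ i, Fintype (S i)]
    [∀ i, Fintype (A i)] [∀ i, Nonempty (A i)]
    (h : ℕ)
    (Ti : (i : N) → S i → A i → S i → ℝ)
    (hTi0 : ∀ i x a y, 0 ≤ Ti i x a y)
    (hTi1 : ∀ i x a, ∑ y, Ti i x a y = 1)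
    -- the factored joint transition function
    (T : ((i : N) → S i) → ((i : N) → A i) → ((i : N) → S i) → ℝ)
    (hT : ∀ s a s', T s a s' = ∏ i, Ti i (s i) (a i) (s' i))
    -- the reward, partitioned over the agents
    (R : ((i : N) → S i) → ((i : N) → A i) → ((i : N) → S i) → ℝ)
    (Ri : N → ((i : N) → S i) → ((i : N) → A i) → ((i : N) → S i) → ℝ)
    (hR : ∀ s a s', R s a s' = ∑ i, Ri i s a s')
    -- the recursive upper-bound functions
    (U : (i : N) → ℕ → S i → ℝ)
    (hUh : ∀ i x, U i h x = 0)
    (hU : ∀ t, t < h → ∀ (i : N) (x : S i),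
      U i t x = ⨆ p : {p : ((i : N) → S i) × ((i : N) → A i) × ((i : N) → S i) //
          p.1 i = x ∧ 0 < T p.1 p.2.1 p.2.2},
        (Ri i p.1.1 p.1.2.1 p.1.2.2 + U i (t + 1) (p.1.2.2 i)))
    -- the recursive lower-bound functions
    (L : (i : N) → ℕ → S i → ℝ)
    (hLh : ∀ i x, L i h x = 0)
    (hL : ∀ t, t < h → ∀ (i : N) (x : S i),
      L i t x = ⨅ p : {p : ((i : N) → S i) × ((i : N) → A i) × ((i : N) → S i) //
          p.1 i = x ∧ 0 < T p.1 p.2.1 p.2.2},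
        (Ri i p.1.1 p.1.2.1 p.1.2.2 + L i (t + 1) (p.1.2.2 i)))
    -- the optimal value function
    (Vstar : ℕ → ((i : N) → S i) → ℝ)
    (hVh : ∀ s, Vstar h s = 0)
    (hV : ∀ t, t < h → ∀ s,
      Vstar t s = ⨆ a : (i : N) → A i,
        ∑ s', T s a s' * (R s a s' + Vstar (t + 1) s'))
    -- the optimal state-action value function
    (Qstar : ℕ → ((i : N) → S i) → ((i : N) → A i) → ℝ)
    (hQ : ∀ t, t < h → ∀ s a,
      Qstar t s a = ∑ s', T s a s' * (R s a s' + Vstar (t + 1) s')) :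
    ∀ t, t < h → ∀ (s : (i : N) → S i) (a : (i : N) → A i),
      (∑ s', T s a s' * (R s a s' + ∑ i, L i (t + 1) (s' i))) ≤ Qstar t s a
      ∧ Qstar t s a ≤ ∑ s', T s a s' * (R s a s' + ∑ i, U i (t + 1) (s' i)) := by
  have hT0 : ∀ s a s', 0 ≤ T s a s' := fun s a s' => by
    rw [hT]
    exact prod_nonneg fun i _ => hTi0 i _ _ _
  have hT1 : ∀ s a, ∑ s', T s a s' = 1 := fun s a => by
    simp only [hT]
    exact Fintype.sum_prod_eq_one _ fun i => hTi1 i _ _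
  intro t ht s a
  rw [hQ t ht s a]
  constructor
  · exact sum_mul_le_sum_mul_of_pos _ (hT0 s a) fun s' _ => add_le_add_right
      (sum_lower_le_value hT0 hT1 hR hLh hL hVh hV ht s') _
  · exact sum_mul_le_sum_mul_of_pos _ (hT0 s a) fun s' _ => add_le_add_right
      (value_le_sum_upper hT0 hT1 hR hUh hU hVh hV ht s') _

theorem statement12
    {N : Type} [Fintype N] [DecidableEq N]
    (S : N → Type) (A : N → Type)
    [∀ i, Fintype (S i)] [∀ i, Nonempty (S i)]
    [∀ i, Fintype (A i)] [∀ i, Nonempty (A i)]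
    (h : ℕ)
    (Ti : (i : N) → S i → A i → S i → ℝ)
    (hTi0 : ∀ i x a y, 0 ≤ Ti i x a y)
    (hTi1 : ∀ i x a, ∑ y, Ti i x a y = 1)
    -- the factored joint transition function
    (T : ((i : N) → S i) → ((i : N) → A i) → ((i : N) → S i) → ℝ)
    (hT : ∀ s a s', T s a s' = ∏ i, Ti i (s i) (a i) (s' i))
    -- the reward, partitioned over the agents
    (R : ((i : N) → S i) → ((i : N) → A i) → ((i : N) → S i) → ℝ)
    (Ri : N → ((i : N) → S i) → ((i : N) → A i) → ((i : N) → S i) → ℝ)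
    (hR : ∀ s a s', R s a s' = ∑ i, Ri i s a s')
    -- the recursive upper-bound functions
    (U : (i : N) → ℕ → S i → ℝ)
    (hUh : ∀ i x, U i h x = 0)
    (hU : ∀ t, t < h → ∀ (i : N) (x : S i),
      U i t x = ⨆ p : {p : ((i : N) → S i) × ((i : N) → A i) × ((i : N) → S i) //
          p.1 i = x ∧ 0 < T p.1 p.2.1 p.2.2},
        (Ri i p.1.1 p.1.2.1 p.1.2.2 + U i (t + 1) (p.1.2.2 i)))
    -- the recursive lower-bound functions
    (L : (i : N) → ℕ → S i → ℝ)
    (hLh : ∀ i x, L i h x = 0)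
    (hL : ∀ t, t < h → ∀ (i : N) (x : S i),
      L i t x = ⨅ p : {p : ((i : N) → S i) × ((i : N) → A i) × ((i : N) → S i) //
          p.1 i = x ∧ 0 < T p.1 p.2.1 p.2.2},
        (Ri i p.1.1 p.1.2.1 p.1.2.2 + L i (t + 1) (p.1.2.2 i)))
    -- the optimal value function
    (Vstar : ℕ → ((i : N) → S i) → ℝ)
    (hVh : ∀ s, Vstar h s = 0)
    (hV : ∀ t, t < h → ∀ s,
      Vstar t s = ⨆ a : (i : N) → A i,
        ∑ s', T s a s' * (R s a s' + Vstar (t + 1) s'))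
    -- the optimal state-action value function
    (Qstar : ℕ → ((i : N) → S i) → ((i : N) → A i) → ℝ)
    (hQ : ∀ t, t < h → ∀ s a,
      Qstar t s a = ∑ s', T s a s' * (R s a s' + Vstar (t + 1) s')) :
    ∀ t, t < h → ∀ (s : (i : N) → S i) (a : (i : N) → A i),
      (∑ s', T s a s' * (R s a s' + ∑ i, L i (t + 1) (s' i))) ≤ Qstar t s a
      ∧ Qstar t s a ≤ ∑ s', T s a s' * (R s a s' + ∑ i, U i (t + 1) (s' i)) :=
  statement12_general S A h Ti hTi0 hTi1 T hT R Ri hR U hUh hU L hLh hL Vstar hVh hV Qstar hQ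
end

section
/- (Soundness of branch-and-bound pruning.) In a transition-independent multi-agent MDP with reward partitioned as R = Σ_{i∈N} R_i and recursive bound functions U_i, L_i as above, define for t < h: UB_t(s,a) = Σ_{s'} T(s,a,s')·(R(s,a,s') + Σ_{i∈N} U_i(t+1, s'^i)), LB_t(s,a) = Σ_{s'} T(s,a,s')·(R(s,a,s') + Σ_{i∈N} L_i(t+1, s'^i)), and Q*_t(s,a) = Σ_{s'} T(s,a,s')·(R(s,a,s') + V*_{t+1}(s')). If for some state s, time t < h, and actions a ≠ a' it holds that UB_t(s,a) ≤ LB_t(s,a'), then removing action a does not change the optimum: V*_t(s) = max_{a''∈A, a''≠a} Q*_t(s,a''). -/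
/-!
STATEMENT 13 (soundness of branch-and-bound pruning): in a transition-independent
multi-agent MDP with reward partitioned as `R = Σ_{i∈N} R_i` and recursive bound
functions `U_i`, `L_i`, define for `t < h` the bounds
`UB_t(s,a) = Σ_{s'} T(s,a,s')·(R(s,a,s') + Σ_i U_i(t+1, s'^i))`,
`LB_t(s,a) = Σ_{s'} T(s,a,s')·(R(s,a,s') + Σ_i L_i(t+1, s'^i))` and the optimal
state-action value `Q*_t(s,a) = Σ_{s'} T(s,a,s')·(R(s,a,s') + V*_{t+1}(s'))`.
If `UB_t(s,a) ≤ LB_t(s,a')` for actions `a ≠ a'`, then pruning `a` is sound: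
`V*_t(s) = max_{a'' ≠ a} Q*_t(s,a'')` (the maximum expressed with `⨆` over the
nonempty subtype `{a'' // a'' ≠ a}`).
-/
theorem statement13
    {N : Type} [Fintype N] [DecidableEq N]
    (S : N → Type) (A : N → Type)
    [∀ i, Fintype (S i)] [∀ i, Nonempty (S i)]
    [∀ i, Fintype (A i)] [∀ i, Nonempty (A i)]
    (h : ℕ)
    (Ti : (i : N) → S i → A i → S i → ℝ)
    (hTi0 : ∀ i x a y, 0 ≤ Ti i x a y)
    (hTi1 : ∀ i x a, ∑ y, Ti i x a y = 1)
    -- the factored joint transition function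
    (T : ((i : N) → S i) → ((i : N) → A i) → ((i : N) → S i) → ℝ)
    (hT : ∀ s a s', T s a s' = ∏ i, Ti i (s i) (a i) (s' i))
    -- the reward, partitioned over the agents
    (R : ((i : N) → S i) → ((i : N) → A i) → ((i : N) → S i) → ℝ)
    (Ri : N → ((i : N) → S i) → ((i : N) → A i) → ((i : N) → S i) → ℝ)
    (hR : ∀ s a s', R s a s' = ∑ i, Ri i s a s')
    -- the recursive upper-bound functions
    (U : (i : N) → ℕ → S i → ℝ)
    (hUh : ∀ i x, U i h x = 0)
    (hU : ∀ t, t < h → ∀ (i : N) (x : S i),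
      U i t x = ⨆ p : {p : ((i : N) → S i) × ((i : N) → A i) × ((i : N) → S i) //
          p.1 i = x ∧ 0 < T p.1 p.2.1 p.2.2},
        (Ri i p.1.1 p.1.2.1 p.1.2.2 + U i (t + 1) (p.1.2.2 i)))
    -- the recursive lower-bound functions
    (L : (i : N) → ℕ → S i → ℝ)
    (hLh : ∀ i x, L i h x = 0)
    (hL : ∀ t, t < h → ∀ (i : N) (x : S i),
      L i t x = ⨅ p : {p : ((i : N) → S i) × ((i : N) → A i) × ((i : N) → S i) //
          p.1 i = x ∧ 0 < T p.1 p.2.1 p.2.2},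
        (Ri i p.1.1 p.1.2.1 p.1.2.2 + L i (t + 1) (p.1.2.2 i)))
    -- the optimal value function
    (Vstar : ℕ → ((i : N) → S i) → ℝ)
    (hVh : ∀ s, Vstar h s = 0)
    (hV : ∀ t, t < h → ∀ s,
      Vstar t s = ⨆ a : (i : N) → A i,
        ∑ s', T s a s' * (R s a s' + Vstar (t + 1) s'))
    -- the optimal state-action value function
    (Qstar : ℕ → ((i : N) → S i) → ((i : N) → A i) → ℝ)
    (hQ : ∀ t, t < h → ∀ s a,
      Qstar t s a = ∑ s', T s a s' * (R s a s' + Vstar (t + 1) s'))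
    -- a state, a time, and two distinct actions such that the pruning test fires
    (s : (i : N) → S i) (t : ℕ) (htless : t < h)
    (a a' : (i : N) → A i) (hne : a ≠ a')
    (hprune :
      (∑ s', T s a s' * (R s a s' + ∑ i, U i (t + 1) (s' i)))
        ≤ ∑ s', T s a' s' * (R s a' s' + ∑ i, L i (t + 1) (s' i))) :
    Vstar t s = ⨆ b : {b : (i : N) → A i // b ≠ a}, Qstar t s b.val := by

  classical
  -- basic facts about T
  have hTnn : ∀ s a s', 0 ≤ T s a s' := by
    intro s a s'
    rw [hT]
    exact Finset.prod_nonneg fun i _ => hTi0 i _ _ _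
  have hTsum : ∀ s a, ∑ s', T s a s' = 1 := by
    intro s a
    simp_rw [hT]
    rw [← Fintype.prod_sum]
    simp [hTi1]
  have hTpos : ∀ (s : (i : N) → S i) (a : (i : N) → A i), ∃ s', 0 < T s a s' := by
    intro s a
    by_contra hcon
    push_neg at hcon
    have : ∑ s', T s a s' = 0 :=
      le_antisymm (Finset.sum_nonpos fun s' _ => hcon s')
        (Finset.sum_nonneg fun s' _ => hTnn s a s')
    rw [hTsum] at this; norm_num at this
  -- nonemptiness of the index type in the definition of U and L
  have hidx : ∀ (i : N) (x : S i),
      Nonempty {p : ((i : N) → S i) × ((i : N) → A i) × ((i : N) → S i) //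
          p.1 i = x ∧ 0 < T p.1 p.2.1 p.2.2} := by
    intro i x
    set s0 : (i : N) → S i := Function.update (Classical.arbitrary _) i x with hs0
    have ha0 : Nonempty ((i : N) → A i) := ⟨fun i => Classical.arbitrary _⟩
    obtain ⟨a0⟩ := ha0
    obtain ⟨s1, hs1⟩ := hTpos s0 a0
    exact ⟨⟨(s0, a0, s1), Function.update_self i x _, hs1⟩⟩
  -- the sandwich lemma
  have key : ∀ d t, t + d = h → ∀ s,
      (∑ i, L i t (s i)) ≤ Vstar t s ∧ Vstar t s ≤ ∑ i, U i t (s i) := by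
    intro d
    induction d with
    | zero =>
      intro t ht s
      simp only [Nat.add_zero] at ht
      subst ht
      simp [hVh, hUh, hLh]
    | succ d ih =>
      intro t ht s
      have htlt : t < h := by omega
      have ih' : ∀ s, (∑ i, L i (t+1) (s i)) ≤ Vstar (t+1) s ∧
          Vstar (t+1) s ≤ ∑ i, U i (t+1) (s i) := ih (t+1) (by omega)
      constructor
      · -- lower bound
        rw [hV t htlt s]
        have hbdd : BddAbove (Set.range fun a : (i : N) → A i =>
            ∑ s', T s a s' * (R s a s' + Vstar (t + 1) s')) :=
          (Set.finite_range _).bddAbove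
        obtain ⟨a0⟩ : Nonempty ((i : N) → A i) := ⟨fun i => Classical.arbitrary _⟩
        refine le_trans ?_ (le_ciSup hbdd a0)
        calc ∑ i, L i t (s i)
            ≤ ∑ i, ∑ s', T s a0 s' * (Ri i s a0 s' + L i (t+1) (s' i)) := by
              refine Finset.sum_le_sum fun i _ => ?_
              have : ∑ s', T s a0 s' * L i t (s i) = L i t (s i) := by
                rw [← Finset.sum_mul, hTsum, one_mul]
              rw [← this]
              refine Finset.sum_le_sum fun s' _ => ?_
              rcases lt_or_eq_of_le (hTnn s a0 s') with hpos | hzero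
              · refine mul_le_mul_of_nonneg_left ?_ (le_of_lt hpos)
                rw [hL t htlt i (s i)]
                refine ciInf_le ((Set.finite_range _).bddBelow)
                  (⟨(s, a0, s'), rfl, hpos⟩ : {p : ((i : N) → S i) × ((i : N) → A i) × ((i : N) → S i) //
                    p.1 i = s i ∧ 0 < T p.1 p.2.1 p.2.2})
              · rw [← hzero]; simp
          _ = ∑ s', T s a0 s' * (R s a0 s' + ∑ i, L i (t+1) (s' i)) := by
              rw [Finset.sum_comm]
              refine Finset.sum_congr rfl fun s' _ => ?_
              rw [← Finset.mul_sum, hR, ← Finset.sum_add_distrib]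
          _ ≤ ∑ s', T s a0 s' * (R s a0 s' + Vstar (t+1) s') := by
              refine Finset.sum_le_sum fun s' _ => ?_
              exact mul_le_mul_of_nonneg_left
                (by linarith [(ih' s').1]) (hTnn s a0 s')
      · -- upper bound
        rw [hV t htlt s]
        refine ciSup_le fun b => ?_
        calc ∑ s', T s b s' * (R s b s' + Vstar (t+1) s')
            ≤ ∑ s', T s b s' * (R s b s' + ∑ i, U i (t+1) (s' i)) := by
              refine Finset.sum_le_sum fun s' _ => ?_
              exact mul_le_mul_of_nonneg_left
                (by linarith [(ih' s').2]) (hTnn s b s')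
          _ = ∑ i, ∑ s', T s b s' * (Ri i s b s' + U i (t+1) (s' i)) := by
              rw [Finset.sum_comm]
              refine Finset.sum_congr rfl fun s' _ => ?_
              rw [← Finset.mul_sum, hR, ← Finset.sum_add_distrib]
          _ ≤ ∑ i, U i t (s i) := by
              refine Finset.sum_le_sum fun i _ => ?_
              have : ∑ s', T s b s' * U i t (s i) = U i t (s i) := by
                rw [← Finset.sum_mul, hTsum, one_mul]
              rw [← this]
              refine Finset.sum_le_sum fun s' _ => ?_
              rcases lt_or_eq_of_le (hTnn s b s') with hpos | hzero
              · refine mul_le_mul_of_nonneg_left ?_ (le_of_lt hpos)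
                rw [hU t htlt i (s i)]
                refine le_ciSup (f := fun p : {p : ((i : N) → S i) × ((i : N) → A i) × ((i : N) → S i) //
                    p.1 i = s i ∧ 0 < T p.1 p.2.1 p.2.2} =>
                    Ri i p.1.1 p.1.2.1 p.1.2.2 + U i (t + 1) (p.1.2.2 i))
                  ((Set.finite_range _).bddAbove) ⟨(s, b, s'), rfl, hpos⟩
              · rw [← hzero]; simp
  have key' := key (h - t - 1) (t+1) (by omega)
  -- Q a ≤ Q a'
  have hQle : Qstar t s a ≤ Qstar t s a' := by
    rw [hQ t htless, hQ t htless]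
    calc ∑ s', T s a s' * (R s a s' + Vstar (t+1) s')
        ≤ ∑ s', T s a s' * (R s a s' + ∑ i, U i (t+1) (s' i)) :=
          Finset.sum_le_sum fun s' _ => mul_le_mul_of_nonneg_left
            (by linarith [(key' s').2]) (hTnn s a s')
      _ ≤ ∑ s', T s a' s' * (R s a' s' + ∑ i, L i (t+1) (s' i)) := hprune
      _ ≤ ∑ s', T s a' s' * (R s a' s' + Vstar (t+1) s') :=
          Finset.sum_le_sum fun s' _ => mul_le_mul_of_nonneg_left
            (by linarith [(key' s').1]) (hTnn s a' s')
  -- conclusion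
  have hbddQ : BddAbove (Set.range fun b : (i : N) → A i => Qstar t s b) :=
    (Set.finite_range _).bddAbove
  have hbddQ' : BddAbove (Set.range fun b : {b : (i : N) → A i // b ≠ a} =>
      Qstar t s b.val) := (Set.finite_range _).bddAbove
  have hne' : Nonempty {b : (i : N) → A i // b ≠ a} := ⟨⟨a', Ne.symm hne⟩⟩
  rw [hV t htless s]
  simp_rw [← hQ t htless s]
  apply le_antisymm
  · refine ciSup_le fun c => ?_
    by_cases hc : c = a
    · subst hc
      exact hQle.trans (le_ciSup hbddQ' ⟨a', Ne.symm hne⟩)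
    · exact le_ciSup hbddQ' ⟨c, hc⟩
  · exact ciSup_le fun b => le_ciSup hbddQ b.val
end
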